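/- arXiv:1206.2578 — 5 statements merged into one kernel-verified Lean document; each statement's English description precedes it below -/
import Mathlib

section
/- Let n ≥ 1, let ε > 0, let g : Tⁿ → ℝ be measurable with ‖g‖_{L^∞} ≤ 1, and let u : Tⁿ × ℝ → ℝ be continuously differentiable. Let H denote the Heaviside function (H(y) = 1 for y ≥ 0 and H(y) = 0 for y < 0). Then ∫_{Tⁿ} ∫_{−ε}^{ε} (1/2) | ∂_y u(x,y) − (1/ε) H(ε g(x) − y) + (1/ε) H(−y) |² dy dx ≥ (1/(2ε)) ( ∫_{Tⁿ} (1/2) | u(x,ε) − u(x,−ε) − g(x) | dx )². -/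
open MeasureTheory Real

noncomputable section

/-- The `n`-dimensional torus `(ℝ/ℤ)ⁿ`, with its normalized Haar (Lebesgue) probability
measure coming from the product measure-space structure. -/
abbrev Torus (n : ℕ) := Fin n → AddCircle (1 : ℝ)

/-- The Heaviside step function: `H(y) = 1` for `y ≥ 0` and `H(y) = 0` for `y < 0`. -/
def Hside (y : ℝ) : ℝ := if 0 ≤ y then 1 else 0

/-! For fixed `x`, write the integrand as `(∂_y u - j)²` with `j = (H(εg - y) - H(-y)) / ε`.
Since `j` integrates to `g x` over `(-ε, ε)`, the fundamental theorem of calculus gives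
`∫ (∂_y u - j) dy = u(x, ε) - u(x, -ε) - g x`, and Cauchy–Schwarz on the interval bounds the
square of this by `2ε` times the inner integral. Integrating in `x` and applying Jensen's
inequality `(∫ |D|)² ≤ ∫ D²` to `D = u(·, ε) - u(·, -ε) - g` on the probability space `Tⁿ`
gives the claim, with a factor `2` to spare. -/

open Set Function

instance : IsProbabilityMeasure (volume : Measure (AddCircle (1 : ℝ))) :=
  ⟨by simp [AddCircle.measure_univ]⟩

section CauchySchwarz

variable {α : Type*} [MeasurableSpace α] {μ : Measure α}

theorem sq_integral_le_measureReal_mul_integral_sq [IsFiniteMeasure μ] {f : α → ℝ}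
    (hf : MemLp f 2 μ) : (∫ x, f x ∂μ) ^ 2 ≤ μ.real univ * ∫ x, f x ^ 2 ∂μ := by
  rcases eq_zero_or_neZero μ with rfl | _
  · simp
  have hμ : 0 < μ.real univ := measureReal_univ_pos
  have jensen := (even_two.convexOn_pow (𝕜 := ℝ)).map_average_le (continuous_pow 2).continuousOn
    isClosed_univ (ae_of_all _ fun _ => mem_univ _) (hf.integrable one_le_two) hf.integrable_sq
  simp only [average_eq, smul_eq_mul, mul_pow] at jensen
  rw [← mul_le_mul_iff_right₀ (inv_pos.2 (pow_pos hμ 2))]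
  calc _ ≤ (μ.real univ)⁻¹ * ∫ x, f x ^ 2 ∂μ := by simpa [inv_pow] using jensen
    _ = _ := by field_simp

theorem sq_intervalIntegral_le_mul_intervalIntegral_sq {a b : ℝ} (hab : a ≤ b) {f : ℝ → ℝ}
    (hf : MemLp f 2 (volume.restrict (Ioc a b))) :
    (∫ y in a..b, f y) ^ 2 ≤ (b - a) * ∫ y in a..b, f y ^ 2 := by
  simpa [intervalIntegral.integral_of_le hab, volume_real_Ioc_of_le hab]
    using sq_integral_le_measureReal_mul_integral_sq hf

end CauchySchwarz

theorem integrable_intervalIntegral_of_norm_le {X E : Type*} [MeasurableSpace X] {μ : Measure X}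
    [IsFiniteMeasure μ] [NormedAddCommGroup E] [NormedSpace ℝ E] {F : X → ℝ → E}
    (hF : StronglyMeasurable (uncurry F)) {a b C : ℝ} (hC : ∀ x, ∀ y ∈ uIoc a b, ‖F x y‖ ≤ C) :
    Integrable (fun x => ∫ y in a..b, F x y) μ := by
  have hmeas : StronglyMeasurable fun x => ∫ y in a..b, F x y :=
    hF.integral_prod_right.sub hF.integral_prod_right
  exact .of_bound hmeas.aestronglyMeasurable (C * |b - a|)
    (ae_of_all _ fun x => intervalIntegral.norm_integral_le_of_norm_le_const (hC x))

theorem monotone_Hside : Monotone Hside := by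
  intro a b hab
  unfold Hside
  split_ifs <;> grind

@[fun_prop]
theorem measurable_Hside : Measurable Hside := monotone_Hside.measurable

theorem abs_Hside_sub_Hside_le_one (a b : ℝ) : |Hside a - Hside b| ≤ 1 := by
  unfold Hside
  split_ifs <;> norm_num

theorem intervalIntegral_Hside_sub {a b c : ℝ} (hac : a ≤ c) (hcb : c ≤ b) :
    ∫ y in a..b, Hside (c - y) = c - a := by
  have hind : (fun y => Hside (c - y)) = (Iic c).indicator 1 := by
    ext y
    simp [Hside, indicator_apply, sub_nonneg]
  rw [hind, intervalIntegral.integral_of_le (hac.trans hcb), integral_indicator measurableSet_Iic,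
    Measure.restrict_restrict measurableSet_Iic, Iic_inter_Ioc_of_le hcb]
  simp [volume_real_Ioc_of_le hac]

def jumpDensity (ε γ y : ℝ) : ℝ := (Hside (ε * γ - y) - Hside (-y)) / ε

section jumpDensity

variable {ε : ℝ}

theorem sub_Hside_add_Hside_eq_sub_jumpDensity (w γ y : ℝ) :
    w - (1 / ε) * Hside (ε * γ - y) + (1 / ε) * Hside (-y) = w - jumpDensity ε γ y := by
  unfold jumpDensity; ring

@[fun_prop]
theorem Measurable.jumpDensity {β : Type*} [MeasurableSpace β] {γ y : β → ℝ} (hγ : Measurable γ)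
    (hy : Measurable y) : Measurable fun p => jumpDensity ε (γ p) (y p) := by
  unfold _root_.jumpDensity; fun_prop

theorem abs_jumpDensity_le (hε : 0 < ε) (γ y : ℝ) : |jumpDensity ε γ y| ≤ ε⁻¹ := by
  rw [jumpDensity, abs_div, abs_of_pos hε, div_eq_inv_mul]
  exact mul_le_of_le_one_right (inv_nonneg.2 hε.le) (abs_Hside_sub_Hside_le_one _ _)

theorem intervalIntegral_jumpDensity (hε : 0 < ε) {γ : ℝ} (hγ : |γ| ≤ 1) :
    ∫ y in (-ε)..ε, jumpDensity ε γ y = γ := by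
  obtain ⟨hγl, hγu⟩ := abs_le.1 hγ
  have hint (c : ℝ) : IntervalIntegrable (fun y => Hside (c - y)) volume (-ε) ε :=
    (monotone_Hside.comp_antitone fun _ _ h => sub_le_sub_left h c).intervalIntegrable
  have hzero : ∫ y in (-ε)..ε, Hside (-y) = ∫ y in (-ε)..ε, Hside (0 - y) := by simp
  simp only [jumpDensity, intervalIntegral.integral_div]
  rw [intervalIntegral.integral_sub (hint _) (by simpa using hint 0), hzero,
    intervalIntegral_Hside_sub (by nlinarith) (by nlinarith),
    intervalIntegral_Hside_sub (by linarith) hε.le]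
  field_simp
  ring

end jumpDensity

theorem sq_sub_le_mul_intervalIntegral_sq_sub_jumpDensity {ε γ : ℝ} (hε : 0 < ε) (hγ : |γ| ≤ 1)
    {v v' : ℝ → ℝ} (hv : ∀ y, HasDerivAt v (v' y) y)
    (hv' : MemLp v' 2 (volume.restrict (Ioc (-ε) ε))) :
    (v ε - v (-ε) - γ) ^ 2 ≤ 2 * ε * ∫ y in (-ε)..ε, (v' y - jumpDensity ε γ y) ^ 2 := by
  have hle : -ε ≤ ε := by linarith
  have hj : MemLp (jumpDensity ε γ) 2 (volume.restrict (Ioc (-ε) ε)) :=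
    .of_bound (by fun_prop : Measurable (jumpDensity ε γ)).aestronglyMeasurable ε⁻¹
      (ae_of_all _ (abs_jumpDensity_le hε γ))
  have hv'int : IntervalIntegrable v' volume (-ε) ε :=
    (intervalIntegrable_iff_integrableOn_Ioc_of_le hle).2 (hv'.integrable one_le_two)
  have hjint : IntervalIntegrable (jumpDensity ε γ) volume (-ε) ε :=
    (intervalIntegrable_iff_integrableOn_Ioc_of_le hle).2 (hj.integrable one_le_two)
  have hint : ∫ y in (-ε)..ε, (v' y - jumpDensity ε γ y) = v ε - v (-ε) - γ := by
    rw [intervalIntegral.integral_sub hv'int hjint,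
      intervalIntegral.integral_eq_sub_of_hasDerivAt (fun y _ => hv y) hv'int,
      intervalIntegral_jumpDensity hε hγ]
  calc (v ε - v (-ε) - γ) ^ 2 = (∫ y in (-ε)..ε, (v' y - jumpDensity ε γ y)) ^ 2 := by rw [hint]
    _ ≤ (ε - -ε) * ∫ y in (-ε)..ε, (v' y - jumpDensity ε γ y) ^ 2 :=
      sq_intervalIntegral_le_mul_intervalIntegral_sq hle (hv'.sub hj)
    _ = _ := by ring

theorem jensen_lower_bound_general {n : ℕ} (ε : ℝ) (hε : 0 < ε)
    (g : Torus n → ℝ) (hg_meas : Measurable g)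
    (hg_bound : ∀ᵐ x : Torus n, |g x| ≤ 1)
    (u u' : Torus n → ℝ → ℝ)
    (hu_cont : Continuous (Function.uncurry u))
    (hu'_cont : Continuous (Function.uncurry u'))
    (hu_deriv : ∀ (x : Torus n) (y : ℝ), HasDerivAt (u x) (u' x y) y) :
    (∫ x : Torus n, ∫ y in (-ε)..ε,
        (1/2) * |u' x y - (1/ε) * Hside (ε * g x - y) + (1/ε) * Hside (-y)| ^ 2)
      ≥ (1/(2*ε)) *
          (∫ x : Torus n, (1/2) * |u x ε - u x (-ε) - g x|) ^ 2 := by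
  obtain ⟨C, hC⟩ := (isCompact_univ.prod isCompact_Icc).exists_bound_of_continuousOn
    (hu'_cont.continuousOn (s := univ ×ˢ Icc (-ε) ε))
  have hu'C (x : Torus n) (y : ℝ) (hy : y ∈ Icc (-ε) ε) : |u' x y| ≤ C :=
    hC (x, y) ⟨mem_univ x, hy⟩
  simp_rw [sub_Hside_add_Hside_eq_sub_jumpDensity, sq_abs, intervalIntegral.integral_const_mul,
    integral_const_mul]
  set D := fun x => u x ε - u x (-ε) - g x
  set G := fun x => ∫ y in (-ε)..ε, (u' x y - jumpDensity ε (g x) y) ^ 2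
  have hslice : ∀ᵐ x, D x ^ 2 ≤ 2 * ε * G x := by
    filter_upwards [hg_bound] with x hx
    refine sq_sub_le_mul_intervalIntegral_sq_sub_jumpDensity hε hx (hu_deriv x)
      (.of_bound (hu'_cont.comp (Continuous.prodMk_right x)).aestronglyMeasurable C ?_)
    filter_upwards [ae_restrict_mem measurableSet_Ioc] with y hy
    exact hu'C x y (Ioc_subset_Icc_self hy)
  have hG : Integrable G := by
    refine integrable_intervalIntegral_of_norm_le (C := (C + ε⁻¹) ^ 2) ?_ fun x y hy => ?_
    · exact Measurable.stronglyMeasurable (by fun_prop)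
    · rw [uIoc_of_le (by linarith)] at hy
      rw [norm_pow]
      gcongr
      exact (norm_sub_le _ _).trans
        (add_le_add (hu'C x y (Ioc_subset_Icc_self hy)) (abs_jumpDensity_le hε _ _))
  have hu_slice (y : ℝ) : Continuous fun x => u x y := hu_cont.comp (.prodMk_left y)
  have hD : AEStronglyMeasurable D :=
    (((hu_slice ε).sub (hu_slice (-ε))).measurable.sub hg_meas).aestronglyMeasurable
  have hD2 : Integrable (fun x => D x ^ 2) :=
    (hG.const_mul (2 * ε)).mono' (hD.pow 2) (by
      filter_upwards [hslice] with x hx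
      rwa [Real.norm_eq_abs, abs_of_nonneg (sq_nonneg _)])
  have hjensen : (∫ x, |D x|) ^ 2 ≤ ∫ x, D x ^ 2 := by
    simpa using sq_integral_le_measureReal_mul_integral_sq
      ((memLp_two_iff_integrable_sq hD.norm).2 (by simpa using hD2))
  have hmono : ∫ x, D x ^ 2 ≤ 2 * ε * ∫ x, G x := by
    rw [← integral_const_mul]
    exact integral_mono_of_nonneg (ae_of_all _ fun x => sq_nonneg _) (hG.const_mul _) hslice
  have hG0 : 0 ≤ ∫ x, G x :=
    integral_nonneg fun x => intervalIntegral.integral_nonneg (by linarith) fun y _ => sq_nonneg _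
  rw [ge_iff_le, one_div, ← div_eq_inv_mul, div_le_iff₀ (by positivity)]
  nlinarith [hjensen.trans hmono]

/-- the key Jensen-inequality lower bound in the liminf part of the
Γ-convergence theorem.  Here `u : Tⁿ × ℝ → ℝ` is continuously differentiable (we record
its continuity, its partial derivative `u'` in the `y`-direction, and the continuity of
that derivative), `g` is measurable with `‖g‖_{L^∞} ≤ 1`, and `ε > 0`.  Then
`∫_{Tⁿ} ∫_{-ε}^{ε} ½ |∂_y u - (1/ε) H(εg(x)-y) + (1/ε) H(-y)|² dy dx
  ≥ (1/(2ε)) (∫_{Tⁿ} ½ |u(x,ε) - u(x,-ε) - g(x)| dx)²`. -/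
theorem jensen_lower_bound {n : ℕ} (hn : 1 ≤ n) (ε : ℝ) (hε : 0 < ε)
    (g : Torus n → ℝ) (hg_meas : Measurable g)
    (hg_bound : ∀ᵐ x : Torus n, |g x| ≤ 1)
    (u u' : Torus n → ℝ → ℝ)
    (hu_cont : Continuous (Function.uncurry u))
    (hu'_cont : Continuous (Function.uncurry u'))
    (hu_deriv : ∀ (x : Torus n) (y : ℝ), HasDerivAt (u x) (u' x y) y) :
    (∫ x : Torus n, ∫ y in (-ε)..ε,
        (1/2) * |u' x y - (1/ε) * Hside (ε * g x - y) + (1/ε) * Hside (-y)| ^ 2)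
      ≥ (1/(2*ε)) *
          (∫ x : Torus n, (1/2) * |u x ε - u x (-ε) - g x|) ^ 2 :=
  jensen_lower_bound_general ε hε g hg_meas hg_bound u u' hu_cont hu'_cont hu_deriv
end
end

section
/- Assume Hypothesis (H). Then the constrained minimal energy G is Lipschitz continuous; more precisely, |G(c₁) − G(c₂)| ≤ ‖φ‖_{L^∞} |c₁ − c₂| for all c₁, c₂ ∈ ℝ. -/
open MeasureTheory Real Filter

noncomputable section

/-- The Euclidean norm of an integer frequency vector `k ∈ ℤⁿ`. -/
def knorm {n : ℕ} (k : Fin n → ℤ) : ℝ := Real.sqrt (∑ i, ((k i : ℝ)) ^ 2)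

/-- The Fourier coefficient `ĝ(k) = ∫_{Tⁿ} g(x) e^{-2πi k·x} dx`. -/
def fCoeff {n : ℕ} (g : Torus n → ℝ) (k : Fin n → ℤ) : ℂ :=
  ∫ x : Torus n, (g x : ℂ) * ∏ i, fourier (-(k i)) (x i)

/-- The square of the `H^{1/2}` seminorm: `[g]_{H^{1/2}}² = Σ_k ‖k‖ |ĝ(k)|²`. -/
def H12SeminormSq {n : ℕ} (g : Torus n → ℝ) : ℝ :=
  ∑' k : Fin n → ℤ, knorm k * ‖fCoeff g k‖ ^ 2

/-- Finiteness of the `H^{1/2}` seminorm, `[g]_{H^{1/2}} < ∞`. -/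
def H12Finite {n : ℕ} (g : Torus n → ℝ) : Prop :=
  Summable fun k : Fin n → ℤ => knorm k * ‖fCoeff g k‖ ^ 2

/-- Hypothesis (H): `φ` is Lipschitz continuous (jointly), 1-periodic in its last
variable, and has zero average. -/
def HypH {n : ℕ} (φ : Torus n → ℝ → ℝ) : Prop :=
  (∃ L, LipschitzWith L (Function.uncurry φ)) ∧
  (∀ x y, φ x (y + 1) = φ x y) ∧
  (∫ x : Torus n, ∫ y in (0:ℝ)..1, φ x y) = 0

/-- The `L^∞` (sup) norm of the wiggly force `φ`. -/
def supNorm {n : ℕ} (φ : Torus n → ℝ → ℝ) : ℝ := ⨆ p : Torus n × ℝ, |φ p.1 p.2|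

/-- `g ∈ L²(Tⁿ)` is a stationary solution of `0 = -(-Δ)^{1/2} g + φ(x,g) + F` iff for every
`k ∈ ℤⁿ`, `‖k‖·ĝ(k)` equals the `k`-th Fourier coefficient of `x ↦ φ(x,g(x)) + F`. -/
def IsStationaryTorus {n : ℕ} (φ : Torus n → ℝ → ℝ) (F : ℝ) (g : Torus n → ℝ) : Prop :=
  MemLp g 2 (volume : Measure (Torus n)) ∧
  ∀ k : Fin n → ℤ, (knorm k : ℂ) * fCoeff g k = fCoeff (fun x => φ x (g x) + F) k

/-- The space `L²(Tⁿ;ℝ)`. -/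
abbrev L2T (n : ℕ) := Lp ℝ 2 (volume : Measure (Torus n))

/-- A mild solution of `g_t = -(-Δ)^{1/2} g + φ(x,g) + F` on the interval `I`: a continuous
curve in `L²` satisfying the variation-of-constants (Duhamel) formula coefficientwise. -/
def IsMildSolution {n : ℕ} (φ : Torus n → ℝ → ℝ) (F : ℝ) (I : Set ℝ)
    (g : ℝ → L2T n) : Prop :=
  ContinuousOn g I ∧
  ∀ t₁ ∈ I, ∀ t₂ ∈ I, t₁ ≤ t₂ → ∀ k : Fin n → ℤ,
    fCoeff (g t₂) k
      = Complex.exp (-(knorm k) * (t₂ - t₁)) * fCoeff (g t₁) k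
        + ∫ s in t₁..t₂,
            Complex.exp (-(knorm k) * (t₂ - s)) * fCoeff (fun x => φ x ((g s) x) + F) k

/-- The constant function `1` as an element of `L²(Tⁿ;ℝ)`. -/
def oneL2 (n : ℕ) : L2T n := MemLp.toLp (fun _ => (1:ℝ)) (memLp_const 1)

/-- The energy `E(g) = (1/2)[g]_{H^{1/2}}² - ∫_{Tⁿ} ∫_0^{g(x)} φ(x,γ) dγ dx`. -/
def energyE {n : ℕ} (φ : Torus n → ℝ → ℝ) (g : Torus n → ℝ) : ℝ :=
  (1/2) * H12SeminormSq g - ∫ x : Torus n, ∫ γ in (0:ℝ)..(g x), φ x γ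

/-- The constrained minimal energy
`G(c) = inf { E(g) : g ∈ L², [g]_{H^{1/2}} < ∞, ∫ g = c }`. -/
def Gmin {n : ℕ} (φ : Torus n → ℝ → ℝ) (c : ℝ) : ℝ :=
  sInf {e : ℝ | ∃ g : Torus n → ℝ, MemLp g 2 (volume : Measure (Torus n)) ∧
    H12Finite g ∧ (∫ x : Torus n, g x) = c ∧ energyE φ g = e}


/-!
Adding a constant `δ` to a competitor `g` moves its mean by `δ`, leaves `[g]_{H^{1/2}}`
unchanged (only the zero mode changes, and it has weight `‖0‖ = 0`), and changes
`∫_0^{g(x)} φ(x, γ) dγ` by at most `‖φ‖_∞ |δ|` at every point. So every energy attained with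
mean `c` is attained up to `‖φ‖_∞ |c - c'|` with mean `c'`, and the infima `G(c)`, `G(c')`
inherit this bound.
-/

instance inst_s3 : IsProbabilityMeasure (volume : Measure (AddCircle (1 : ℝ))) :=
  ⟨by simp⟩

section Fourier

theorem integral_fourier_eq_zero {T : ℝ} [hT : Fact (0 < T)] {m : ℤ} (hm : m ≠ 0) :
    ∫ x : AddCircle T, (fourier m x : ℂ) = 0 :=
  integral_eq_zero_of_add_right_eq_neg (fourier_add_half_inv_index hm hT.out)

theorem integral_prod_fourier_eq_zero {ι : Type*} [Fintype ι] {T : ℝ} [Fact (0 < T)]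
    {m : ι → ℤ} (hm : m ≠ 0) :
    ∫ x : ι → AddCircle T, ∏ i, (fourier (m i) (x i) : ℂ) = 0 := by
  obtain ⟨i, hi⟩ := Function.ne_iff.mp hm
  rw [integral_fintype_prod_volume_eq_prod (fun i x => (fourier (m i) x : ℂ))]
  exact Finset.prod_eq_zero (Finset.mem_univ i) (integral_fourier_eq_zero hi)

variable {n : ℕ}

theorem knorm_zero : knorm (0 : Fin n → ℤ) = 0 := by
  simp [knorm]

theorem fCoeff_add_const {g : Torus n → ℝ} (hg : Integrable g) (δ : ℝ) {k : Fin n → ℤ}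
    (hk : k ≠ 0) : fCoeff (fun x => g x + δ) k = fCoeff g k := by
  set e : Torus n → ℂ := fun x => ∏ i, (fourier (-(k i)) (x i) : ℂ)
  have he_cont : Continuous e :=
    continuous_finsetProd _ fun i _ => (fourier (-(k i))).continuous.comp (continuous_apply i)
  have he_norm : ∀ x, ‖e x‖ = 1 := fun x => by
    simp only [e, norm_prod, fourier_apply, Circle.norm_coe, Finset.prod_const_one]
  have he_int : Integrable e :=
    (integrable_const (1 : ℝ)).mono' he_cont.aestronglyMeasurable
      (.of_forall fun x => (he_norm x).le)
  have hge_int : Integrable fun x => (g x : ℂ) * e x :=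
    hg.ofReal.mul_bdd he_cont.aestronglyMeasurable (.of_forall fun x => (he_norm x).le)
  have he_zero : ∫ x, e x = 0 := integral_prod_fourier_eq_zero (neg_ne_zero.mpr hk)
  calc fCoeff (fun x => g x + δ) k = ∫ x, ((g x : ℂ) * e x + δ * e x) := by
        simp only [fCoeff, Complex.ofReal_add, add_mul]; rfl
    _ = fCoeff g k := by
        rw [integral_add hge_int (he_int.const_mul _), integral_const_mul, he_zero, mul_zero,
          add_zero]
        rfl

theorem knorm_mul_norm_fCoeff_add_const_sq {g : Torus n → ℝ} (hg : Integrable g) (δ : ℝ)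
    (k : Fin n → ℤ) :
    knorm k * ‖fCoeff (fun x => g x + δ) k‖ ^ 2 = knorm k * ‖fCoeff g k‖ ^ 2 := by
  rcases eq_or_ne k 0 with rfl | hk
  · simp [knorm_zero]
  · rw [fCoeff_add_const hg δ hk]

theorem H12Finite.add_const {g : Torus n → ℝ} (hfin : H12Finite g) (hg : Integrable g)
    (δ : ℝ) : H12Finite fun x => g x + δ := by
  simpa only [H12Finite, knorm_mul_norm_fCoeff_add_const_sq hg δ] using hfin

theorem H12SeminormSq_add_const {g : Torus n → ℝ} (hg : Integrable g) (δ : ℝ) :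
    H12SeminormSq (fun x => g x + δ) = H12SeminormSq g := by
  simp only [H12SeminormSq, knorm_mul_norm_fCoeff_add_const_sq hg δ]

end Fourier

section Potential

variable {X : Type*} [TopologicalSpace X] [MeasurableSpace X] [OpensMeasurableSpace X]
  [SecondCountableTopology X] [TopologicalSpace.PseudoMetrizableSpace X] {μ : Measure X}
  {f : X → ℝ → ℝ} {M : ℝ}

theorem integrable_primitive_comp (hf : Continuous (Function.uncurry f))
    (hM : ∀ x y, |f x y| ≤ M) {g : X → ℝ} (hg : Integrable g μ) :
    Integrable (fun x => ∫ γ in (0 : ℝ)..g x, f x γ) μ := by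
  have hP : Continuous fun p : X × ℝ => ∫ γ in (0 : ℝ)..p.2, f p.1 γ :=
    intervalIntegral.continuous_parametric_primitive_of_continuous hf
  refine (hg.norm.const_mul M).mono'
    (hP.comp_aestronglyMeasurable (aestronglyMeasurable_id.prodMk hg.aestronglyMeasurable))
    (.of_forall fun x => ?_)
  simpa using intervalIntegral.norm_integral_le_of_norm_le_const
    (a := 0) (b := g x) fun γ _ => (Real.norm_eq_abs (f x γ)).trans_le (hM x γ)

theorem integral_primitive_le_integral_primitive_add_const [IsProbabilityMeasure μ]
    (hf : Continuous (Function.uncurry f)) (hM : ∀ x y, |f x y| ≤ M) {g : X → ℝ}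
    (hg : Integrable g μ) (δ : ℝ) :
    ∫ x, (∫ γ in (0 : ℝ)..g x, f x γ) ∂μ
      ≤ (∫ x, (∫ γ in (0 : ℝ)..(g x + δ), f x γ) ∂μ) + M * |δ| := by
  have hfx : ∀ x a b, IntervalIntegrable (f x) volume a b := fun x _ _ =>
    (hf.comp (Continuous.prodMk_right x)).intervalIntegrable _ _
  have hstep : ∀ x,
      ‖(∫ γ in (0 : ℝ)..g x, f x γ) - ∫ γ in (0 : ℝ)..(g x + δ), f x γ‖ ≤ M * |δ| := fun x => by
    rw [← norm_neg, neg_sub, intervalIntegral.integral_interval_sub_left (hfx x _ _) (hfx x _ _)]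
    simpa using intervalIntegral.norm_integral_le_of_norm_le_const
      (a := g x) (b := g x + δ) fun γ _ => (Real.norm_eq_abs (f x γ)).trans_le (hM x γ)
  have hgδ : Integrable (fun x => g x + δ) μ := hg.add (integrable_const δ)
  have hdiff := norm_integral_le_of_norm_le_const (μ := μ) (.of_forall hstep)
  rw [integral_sub (integrable_primitive_comp hf hM hg) (integrable_primitive_comp hf hM hgδ),
    probReal_univ, mul_one, Real.norm_eq_abs] at hdiff
  linarith [le_abs_self (∫ x, (∫ γ in (0 : ℝ)..g x, f x γ) ∂μ -
    ∫ x, (∫ γ in (0 : ℝ)..(g x + δ), f x γ) ∂μ)]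

end Potential

theorem bddAbove_range_abs_of_periodic {X : Type*} [TopologicalSpace X] [CompactSpace X]
    {f : X → ℝ → ℝ} (hf : Continuous (Function.uncurry f))
    (hper : ∀ x y, f x (y + 1) = f x y) :
    BddAbove (Set.range fun p : X × ℝ => |f p.1 p.2|) := by
  obtain ⟨C, hC⟩ := (isCompact_univ.prod (isCompact_Icc (a := (0 : ℝ)) (b := 1))).bddAbove_image
    (continuous_abs.comp hf).continuousOn
  refine ⟨C, ?_⟩
  rintro _ ⟨⟨x, y⟩, rfl⟩
  obtain ⟨y', hy', hfy⟩ := Function.Periodic.exists_mem_Ico₀ (fun y => hper x y) one_pos y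
  simp only [hfy]
  exact hC ⟨(x, y'), ⟨Set.mem_univ x, Set.Ico_subset_Icc_self hy'⟩, rfl⟩

theorem supNorm_nonneg {n : ℕ} (φ : Torus n → ℝ → ℝ) : 0 ≤ supNorm φ :=
  Real.iSup_nonneg fun _ => abs_nonneg _

theorem abs_le_supNorm {n : ℕ} {φ : Torus n → ℝ → ℝ} (hφ : Continuous (Function.uncurry φ))
    (hper : ∀ x y, φ x (y + 1) = φ x y) (x : Torus n) (y : ℝ) : |φ x y| ≤ supNorm φ :=
  le_ciSup (bddAbove_range_abs_of_periodic hφ hper) (x, y)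

theorem energyE_add_const_le {n : ℕ} {φ : Torus n → ℝ → ℝ} {M : ℝ}
    (hφ : Continuous (Function.uncurry φ)) (hM : ∀ x y, |φ x y| ≤ M) {g : Torus n → ℝ}
    (hg : Integrable g) (δ : ℝ) :
    energyE φ (fun x => g x + δ) ≤ energyE φ g + M * |δ| := by
  have := integral_primitive_le_integral_primitive_add_const hφ hM hg δ
  rw [energyE, energyE, H12SeminormSq_add_const hg δ]
  linarith

theorem csInf_le_csInf_add_of_forall_exists_le {S T : Set ℝ} {d : ℝ} (hd : 0 ≤ d)
    (hST : ∀ e ∈ S, ∃ e' ∈ T, e' ≤ e + d) (hTS : ∀ e ∈ T, ∃ e' ∈ S, e' ≤ e + d) :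
    sInf T ≤ sInf S + d := by
  -- Emptiness and unboundedness below pass from `S` to `T`, so in those cases both infima are
  -- the junk value `0`.
  rcases S.eq_empty_or_nonempty with rfl | hS
  · have hT : T = ∅ := Set.eq_empty_of_forall_notMem fun e he => by
      obtain ⟨_, he', -⟩ := hTS e he
      exact he'
    simp [hT, hd]
  by_cases hSb : BddBelow S
  · have hTb : BddBelow T := by
      obtain ⟨b, hb⟩ := hSb
      refine ⟨b - d, fun e he => ?_⟩
      obtain ⟨e', he', hle⟩ := hTS e he
      linarith [hb he']
    have : sInf T - d ≤ sInf S := le_csInf hS fun e he => by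
      obtain ⟨e', he', hle⟩ := hST e he
      linarith [csInf_le hTb he']
    linarith
  · have hTb : ¬ BddBelow T := fun ⟨b, hb⟩ => hSb ⟨b - d, fun e he => by
      obtain ⟨e', he', hle⟩ := hST e he
      linarith [hb he']⟩
    simp [Real.sInf_of_not_bddBelow hSb, Real.sInf_of_not_bddBelow hTb, hd]

theorem abs_csInf_sub_csInf_le_of_forall_exists_le {S : ℝ → Set ℝ} {M : ℝ} (hM : 0 ≤ M)
    (hS : ∀ c c', ∀ e ∈ S c, ∃ e' ∈ S c', e' ≤ e + M * |c' - c|) (c₁ c₂ : ℝ) :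
    |sInf (S c₁) - sInf (S c₂)| ≤ M * |c₁ - c₂| := by
  have hd : 0 ≤ M * |c₁ - c₂| := mul_nonneg hM (abs_nonneg _)
  have h₁₂ : ∀ e ∈ S c₁, ∃ e' ∈ S c₂, e' ≤ e + M * |c₁ - c₂| := by
    simpa only [abs_sub_comm c₂ c₁] using hS c₁ c₂
  have h₂₁ : ∀ e ∈ S c₂, ∃ e' ∈ S c₁, e' ≤ e + M * |c₁ - c₂| := hS c₂ c₁
  rw [abs_sub_le_iff]
  constructor
  · linarith [csInf_le_csInf_add_of_forall_exists_le hd h₂₁ h₁₂]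
  · linarith [csInf_le_csInf_add_of_forall_exists_le hd h₁₂ h₂₁]

theorem Gmin_lipschitz_general {n : ℕ} (φ : Torus n → ℝ → ℝ) (hφ : HypH φ)
    (c₁ c₂ : ℝ) : |Gmin φ c₁ - Gmin φ c₂| ≤ supNorm φ * |c₁ - c₂| := by
  obtain ⟨⟨L, hL⟩, hper, -⟩ := hφ
  have hbound := abs_le_supNorm hL.continuous hper
  refine abs_csInf_sub_csInf_le_of_forall_exists_le (supNorm_nonneg φ) (S := fun c =>
    {e | ∃ g : Torus n → ℝ, MemLp g 2 volume ∧ H12Finite g ∧ ∫ x, g x = c ∧ energyE φ g = e})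
    ?_ c₁ c₂
  rintro c c' _ ⟨g, hg, hfin, rfl, rfl⟩
  have hgi : Integrable g := hg.integrable one_le_two
  refine ⟨_, ⟨fun x => g x + (c' - ∫ x, g x), hg.add (memLp_const _),
    hfin.add_const hgi _, ?_, rfl⟩, energyE_add_const_le hL.continuous hbound hgi _⟩
  simp [integral_add hgi (integrable_const _)]

/-- Under Hypothesis (H), the constrained minimal energy `G` is Lipschitz
continuous with constant `‖φ‖_{L^∞}`. -/
theorem Gmin_lipschitz {n : ℕ} (hn : 1 ≤ n) (φ : Torus n → ℝ → ℝ) (hφ : HypH φ)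
    (c₁ c₂ : ℝ) : |Gmin φ c₁ - Gmin φ c₂| ≤ supNorm φ * |c₁ - c₂| :=
  Gmin_lipschitz_general φ hφ c₁ c₂
end
end

section
/- Let φ : ℝ → ℝ be Lipschitz continuous and 1-periodic, and let F ∈ ℝ satisfy −max φ ≤ F ≤ −min φ. Then every differentiable solution g : ℝ → ℝ of g'(t) = F + φ(g(t)) satisfies |g(t) − g(0)| ≤ 1 for all t ∈ ℝ; i.e., the interface is stuck (pinned) and its average velocity is zero. -/
/-!
The zeros of `γ ↦ F + φ(γ)` are rest points of the ODE, and the hypothesis on `F` puts one in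
every interval of length one (intermediate value theorem on a period). By uniqueness of
solutions of a Lipschitz ODE, a solution that reaches a rest point is constant, so by continuity
it can never cross one: `g` stays between the nearest rest point below `g 0` (at distance at
most one) and the nearest one above it.
-/

open Set Function

theorem Function.Periodic.exists_mem_Icc_eq {α : Type*} [ConditionallyCompleteLinearOrder α]
    [TopologicalSpace α] [OrderTopology α] {φ : ℝ → α} {c : ℝ} (hφ : Continuous φ)
    (hp : Periodic φ c) (hc : 0 < c) (x : ℝ) {y : α}
    (hy : y ∈ Icc (sInf (range φ)) (sSup (range φ))) : ∃ z ∈ Icc x (x + c), φ z = y := by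
  rw [← hp.image_Icc hc x] at hy
  have hne : (φ '' Icc x (x + c)).Nonempty := (nonempty_Icc.2 (by linarith)).image φ
  have hK : IsCompact (φ '' Icc x (x + c)) := isCompact_Icc.image hφ
  exact (isPreconnected_Icc.image φ hφ.continuousOn).Icc_subset (hK.sInf_mem hne)
    (hK.sSup_mem hne) hy

theorem ODE_solution_eq_const_of_apply_eq_zero {E : Type*} [NormedAddCommGroup E]
    [NormedSpace ℝ E] {v : E → E} {K : NNReal} (hv : LipschitzWith K v) {c : E} (hc : v c = 0)
    {g : ℝ → E} (hg : ∀ t, HasDerivAt g (v (g t)) t) {t₀ : ℝ} (ht₀ : g t₀ = c) :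
    g = fun _ => c :=
  ODE_solution_unique_univ (v := fun _ => v) (s := fun _ => univ) (fun _ => hv.lipschitzOnWith)
    (fun t => ⟨hg t, mem_univ _⟩) (fun t => ⟨hc ▸ hasDerivAt_const t c, mem_univ _⟩) ht₀

section RestPoint

variable {v : ℝ → ℝ} {K : NNReal} {c : ℝ} {g : ℝ → ℝ}

theorem ODE_solution_eq_of_apply_eq_zero_of_mem_uIcc (hv : LipschitzWith K v) (hc : v c = 0)
    (hg : ∀ t, HasDerivAt g (v (g t)) t) {s t : ℝ} (hst : c ∈ uIcc (g s) (g t)) : g t = c := by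
  have hcont : Continuous g := continuous_iff_continuousAt.2 fun t => (hg t).continuousAt
  obtain ⟨r, -, hr⟩ := intermediate_value_uIcc hcont.continuousOn hst
  rw [ODE_solution_eq_const_of_apply_eq_zero hv hc hg hr]

theorem ODE_solution_ge_of_apply_eq_zero (hv : LipschitzWith K v) (hc : v c = 0)
    (hg : ∀ t, HasDerivAt g (v (g t)) t) {s : ℝ} (hs : c ≤ g s) (t : ℝ) : c ≤ g t := by
  by_contra! ht
  exact ht.ne <| ODE_solution_eq_of_apply_eq_zero_of_mem_uIcc hv hc hg
    (mem_uIcc.2 (Or.inr ⟨ht.le, hs⟩))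

theorem ODE_solution_le_of_apply_eq_zero (hv : LipschitzWith K v) (hc : v c = 0)
    (hg : ∀ t, HasDerivAt g (v (g t)) t) {s : ℝ} (hs : g s ≤ c) (t : ℝ) : g t ≤ c := by
  by_contra! ht
  exact ht.ne' <| ODE_solution_eq_of_apply_eq_zero_of_mem_uIcc hv hc hg
    (mem_uIcc.2 (Or.inl ⟨hs, ht.le⟩))

end RestPoint

/-- for the one-dimensional ODE model `ġ = F + φ(g)` with `φ` Lipschitz and
1-periodic, if `-max φ ≤ F ≤ -min φ` then every solution stays within distance 1 of its
initial value: the interface is pinned and its average velocity is zero. -/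
theorem ode_pinned (φ : ℝ → ℝ) (L : NNReal) (hφl : LipschitzWith L φ)
    (hφp : Function.Periodic φ 1) (F : ℝ)
    (hF₁ : -sSup (Set.range φ) ≤ F) (hF₂ : F ≤ -sInf (Set.range φ))
    (g : ℝ → ℝ) (hg : ∀ t, HasDerivAt g (F + φ (g t)) t) :
    ∀ t : ℝ, |g t - g 0| ≤ 1 := by
  have hv : LipschitzWith L (fun x => F + φ x) := by simpa using (LipschitzWith.const F).add hφl
  have hF : -F ∈ Icc (sInf (range φ)) (sSup (range φ)) := ⟨by linarith, by linarith⟩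
  obtain ⟨a, ha, hφa⟩ := hφp.exists_mem_Icc_eq hφl.continuous one_pos (g 0 - 1) hF
  obtain ⟨b, hb, hφb⟩ := hφp.exists_mem_Icc_eq hφl.continuous one_pos (g 0) hF
  have hva : F + φ a = 0 := by rw [hφa, add_neg_cancel]
  have hvb : F + φ b = 0 := by rw [hφb, add_neg_cancel]
  intro t
  have hat := ODE_solution_ge_of_apply_eq_zero hv hva hg (s := 0) (by linarith [ha.2]) t
  have hbt := ODE_solution_le_of_apply_eq_zero hv hvb hg (s := 0) hb.1 t
  rw [abs_le]
  constructor <;> linarith [ha.1, hb.2]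
end

section
/- Let φ : ℝ → ℝ be twice continuously differentiable and 1-periodic, attaining its minimum on [0,1) at a unique point g₀ with φ''(g₀) > 0, and set F_c = −min φ. For F > F_c define v̄(F) = (∫_0^1 dγ/(F + φ(γ)))⁻¹. Then v̄(F)/√(F − F_c) → √(φ''(g₀)/2)/π as F → F_c from above; i.e., the effective velocity scales as the square root of the excess force above the depinning threshold. -/
/-!
Write `ψ x = φ (g₀ + x) - φ g₀ ≥ 0` and `ε = F - F_c`, so that by periodicity
`∫₀¹ dγ / (F + φ γ) = ∫_{-1/2}^{1/2} dx / (ε + ψ x)`. By Taylor's theorem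
`ψ x = (c + o(1)) x²` with `c = φ''(g₀) / 2`, and the model integral is explicit:
`√ε ∫_α^β dx / (ε + c x²) = (arctan (√(c/ε) β) - arctan (√(c/ε) α)) / √c → π / √c`.
Squeezing `ψ` between `(c ± δ) x²` near `0`, and using that `ψ` is bounded below by a
positive constant away from `0` (uniqueness of the minimum), the contribution of the
complement is `O(1) = o(ε^{-1/2})`, so `√ε ∫ dx / (ε + ψ x) → π / √c`; inverting gives the law.
-/

open Real Filter Topology Set

theorem tendsto_sqrt_nhdsGT_zero : Tendsto (fun ε : ℝ => √ε) (𝓝[>] 0) (𝓝[>] 0) :=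
  tendsto_nhdsWithin_iff.2
    ⟨by simpa using (continuous_sqrt.tendsto 0).mono_left nhdsWithin_le_nhds,
      eventually_mem_nhdsWithin.mono fun _ hε => sqrt_pos.2 hε⟩

theorem tendsto_sub_nhdsGT_zero (a : ℝ) : Tendsto (fun x => x - a) (𝓝[>] a) (𝓝[>] 0) :=
  tendsto_nhdsWithin_iff.2
    ⟨by simpa using ((continuous_sub_right a).tendsto a).mono_left nhdsWithin_le_nhds,
      eventually_mem_nhdsWithin.mono fun _ hx => sub_pos.2 (mem_Ioi.1 hx)⟩

theorem integral_one_div_add_mul_sq {ε c : ℝ} (hε : 0 < ε) (hc : 0 < c) (α β : ℝ) :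
    ∫ x in α..β, 1 / (ε + c * x ^ 2)
      = (arctan (√c / √ε * β) - arctan (√c / √ε * α)) / (√ε * √c) := by
  have hk : 0 < √c / √ε := by positivity
  have hpt : ∀ x : ℝ, 1 / (ε + c * x ^ 2) = ε⁻¹ * (1 / (1 + (√c / √ε * x) ^ 2)) := by
    intro x
    rw [mul_pow, div_pow, sq_sqrt hc.le, sq_sqrt hε.le]
    field_simp
  simp_rw [hpt]
  rw [intervalIntegral.integral_const_mul,
    intervalIntegral.integral_comp_mul_left (fun y => 1 / (1 + y ^ 2)) hk.ne',
    integral_one_div_one_add_sq, smul_eq_mul]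
  have hsq := sq_sqrt hε.le
  field_simp
  rw [hsq]

theorem tendsto_sqrt_mul_integral_one_div_add_mul_sq {c α β : ℝ} (hc : 0 < c) (hα : α < 0)
    (hβ : 0 < β) :
    Tendsto (fun ε => √ε * ∫ x in α..β, 1 / (ε + c * x ^ 2)) (𝓝[>] 0) (𝓝 (π / √c)) := by
  have hk : Tendsto (fun ε : ℝ => √c / √ε) (𝓝[>] 0) atTop := by
    simp_rw [div_eq_mul_inv]
    exact (tendsto_inv_nhdsGT_zero.comp tendsto_sqrt_nhdsGT_zero).const_mul_atTop (sqrt_pos.2 hc)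
  have hβ' := (tendsto_arctan_atTop.mono_right nhdsWithin_le_nhds).comp
    (hk.atTop_mul_const hβ)
  have hα' := (tendsto_arctan_atBot.mono_right nhdsWithin_le_nhds).comp
    (hk.atTop_mul_const_of_neg hα)
  have hlim := (hβ'.sub hα').div_const √c
  rw [show (π / 2 - -(π / 2)) / √c = π / √c by ring] at hlim
  refine hlim.congr' (eventually_mem_nhdsWithin.mono fun ε (hε : 0 < ε) => ?_)
  simp only [Function.comp_apply, integral_one_div_add_mul_sq hε hc]
  field_simp

theorem ContDiff.isLittleO_sub_taylor_two {f : ℝ → ℝ} (hf : ContDiff ℝ 2 f) (x₀ : ℝ) :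
    (fun x => f (x₀ + x) - (f x₀ + deriv f x₀ * x + deriv (deriv f) x₀ / 2 * x ^ 2))
      =o[𝓝 0] fun x => x ^ 2 := by
  have hshift : Tendsto (fun x => x₀ + x) (𝓝 0) (𝓝 x₀) := by
    simpa using (continuous_const_add x₀).tendsto 0
  have htaylor : ∀ y, taylorWithinEval f 2 univ x₀ y
      = f x₀ + deriv f x₀ * (y - x₀) + deriv (deriv f) x₀ / 2 * (y - x₀) ^ 2 := fun y => by
    simp only [taylorWithinEval_succ, taylor_within_zero_eval, iteratedDerivWithin_univ,
      iteratedDeriv_succ, iteratedDeriv_zero, smul_eq_mul]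
    norm_num
    ring
  refine ((taylor_isLittleO_univ hf (x₀ := x₀)).comp_tendsto hshift).congr (fun x => ?_)
    (fun x => ?_) <;> simp only [Function.comp_apply, htaylor, add_sub_cancel_left]

section LittleO

variable {l : Filter ℝ} {ψ : ℝ → ℝ} {c c' : ℝ}

theorem eventually_le_mul_sq_of_isLittleO (h : (fun x => ψ x - c * x ^ 2) =o[l] fun x => x ^ 2)
    (hcc' : c < c') : ∀ᶠ x in l, ψ x ≤ c' * x ^ 2 := by
  filter_upwards [h.bound (sub_pos.2 hcc')] with x hx
  rw [Real.norm_eq_abs, norm_pow, Real.norm_eq_abs, sq_abs] at hx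
  nlinarith [le_abs_self (ψ x - c * x ^ 2)]

theorem eventually_mul_sq_le_of_isLittleO (h : (fun x => ψ x - c * x ^ 2) =o[l] fun x => x ^ 2)
    (hc'c : c' < c) : ∀ᶠ x in l, c' * x ^ 2 ≤ ψ x := by
  filter_upwards [h.bound (sub_pos.2 hc'c)] with x hx
  rw [Real.norm_eq_abs, norm_pow, Real.norm_eq_abs, sq_abs] at hx
  nlinarith [neg_abs_le (ψ x - c * x ^ 2)]

end LittleO

section Localization

variable {ψ : ℝ → ℝ} {c α β b : ℝ}

theorem intervalIntegrable_one_div_add {ε : ℝ} (hε : 0 < ε) (hαβ : α ≤ β)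
    (hψ : ContinuousOn ψ (Icc α β)) (hψ0 : ∀ x ∈ Icc α β, 0 ≤ ψ x) :
    IntervalIntegrable (fun x => 1 / (ε + ψ x)) MeasureTheory.volume α β :=
  (continuousOn_const.div (continuousOn_const.add hψ) fun x hx =>
    (add_pos_of_pos_of_nonneg hε (hψ0 x hx)).ne').intervalIntegrable_of_Icc hαβ

theorem nonneg_of_pos_of_eventually_mul_sq_le {s : Set ℝ} (hpos : ∀ x ∈ s, x ≠ 0 → 0 < ψ x)
    (hge : ∀ᶠ x in 𝓝 0, c * x ^ 2 ≤ ψ x) : ∀ x ∈ s, 0 ≤ ψ x := fun x hx => by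
  rcases eq_or_ne x 0 with rfl | hx0
  · simpa using hge.self_of_nhds
  · exact (hpos x hx hx0).le

theorem eventually_lt_sqrt_mul_integral_one_div_add (hα : α < 0) (hβ : 0 < β)
    (hψ : ContinuousOn ψ (Icc α β)) (hψ0 : ∀ x ∈ Icc α β, 0 ≤ ψ x) (hc : 0 < c)
    (hle : ∀ᶠ x in 𝓝 0, ψ x ≤ c * x ^ 2) (hb : b < π / √c) :
    ∀ᶠ ε in 𝓝[>] 0, b < √ε * ∫ x in α..β, 1 / (ε + ψ x) := by
  obtain ⟨l, u, ⟨hl, hu⟩, hlu⟩ := mem_nhds_iff_exists_Ioo_subset.1 hle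
  have hα' : max α l < 0 := max_lt hα hl
  have hβ' : 0 < min β u := lt_min hβ hu
  have hsub : Icc (max α l) (min β u) ⊆ Icc α β :=
    Icc_subset_Icc (le_max_left _ _) (min_le_left _ _)
  filter_upwards [(tendsto_sqrt_mul_integral_one_div_add_mul_sq hc hα' hβ').eventually_const_lt hb,
    self_mem_nhdsWithin] with ε hmodel (hε : 0 < ε)
  refine hmodel.trans_le (mul_le_mul_of_nonneg_left ?_ (sqrt_nonneg ε))
  calc ∫ x in (max α l)..(min β u), 1 / (ε + c * x ^ 2)
      ≤ ∫ x in (max α l)..(min β u), 1 / (ε + ψ x) := by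
        refine intervalIntegral.integral_mono_on_of_le_Ioo (hα'.trans hβ').le
          (intervalIntegrable_one_div_add hε (hα'.trans hβ').le (by fun_prop)
            fun x _ => by positivity)
          (intervalIntegrable_one_div_add hε (hα'.trans hβ').le (hψ.mono hsub)
            fun x hx => hψ0 x (hsub hx)) fun x hx => ?_
        have hx' : x ∈ Ioo l u :=
          ⟨(le_max_right _ _).trans_lt hx.1, hx.2.trans_le (min_le_right _ _)⟩
        exact one_div_le_one_div_of_le
          (add_pos_of_pos_of_nonneg hε (hψ0 x (hsub (Ioo_subset_Icc_self hx))))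
          (add_le_add_right (hlu hx') ε)
    _ ≤ ∫ x in α..β, 1 / (ε + ψ x) :=
        intervalIntegral.integral_mono_interval (le_max_left _ _) (hα'.trans hβ').le
          (min_le_left _ _)
          ((MeasureTheory.ae_restrict_iff' measurableSet_Ioc).2 (Eventually.of_forall fun x hx =>
            (one_div_pos.2 (add_pos_of_pos_of_nonneg hε (hψ0 x (Ioc_subset_Icc_self hx)))).le))
          (intervalIntegrable_one_div_add hε (hα.trans hβ).le hψ hψ0)

theorem eventually_sqrt_mul_integral_one_div_add_lt (hα : α < 0) (hβ : 0 < β)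
    (hψ : ContinuousOn ψ (Icc α β)) (hpos : ∀ x ∈ Icc α β, x ≠ 0 → 0 < ψ x) (hc : 0 < c)
    (hge : ∀ᶠ x in 𝓝 0, c * x ^ 2 ≤ ψ x) (hb : π / √c < b) :
    ∀ᶠ ε in 𝓝[>] 0, √ε * ∫ x in α..β, 1 / (ε + ψ x) < b := by
  obtain ⟨l, u, hlu0, hlu⟩ := mem_nhds_iff_exists_Ioo_subset.1 hge
  obtain ⟨m, hm, hmψ⟩ := (isCompact_Icc.diff isOpen_Ioo).exists_forall_le' (hψ.mono sdiff_subset)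
    fun x hx => hpos x hx.1 fun hx0 => hx.2 (hx0 ▸ hlu0)
  have hψ0 := nonneg_of_pos_of_eventually_mul_sq_le hpos hge
  have hαβ : α ≤ β := (hα.trans hβ).le
  have hlim := (tendsto_sqrt_mul_integral_one_div_add_mul_sq hc hα hβ).add
    ((tendsto_sqrt_nhdsGT_zero.mono_right nhdsWithin_le_nhds).mul_const ((β - α) * m⁻¹))
  rw [zero_mul, add_zero] at hlim
  filter_upwards [hlim.eventually_lt_const hb, self_mem_nhdsWithin] with ε hlt (hε : 0 < ε)
  refine lt_of_le_of_lt ?_ hlt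
  rw [← mul_add]
  refine mul_le_mul_of_nonneg_left ?_ (sqrt_nonneg ε)
  have hmodel_int := intervalIntegrable_one_div_add hε hαβ (ψ := fun x => c * x ^ 2) (by fun_prop)
    fun x _ => by positivity
  calc ∫ x in α..β, 1 / (ε + ψ x) ≤ ∫ x in α..β, (1 / (ε + c * x ^ 2) + m⁻¹) := by
        refine intervalIntegral.integral_mono_on hαβ
          (intervalIntegrable_one_div_add hε hαβ hψ hψ0) (hmodel_int.add intervalIntegrable_const)
          fun x hx => ?_
        by_cases hxlu : x ∈ Ioo l u
        · have hmodel_le : 1 / (ε + ψ x) ≤ 1 / (ε + c * x ^ 2) :=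
            one_div_le_one_div_of_le (by positivity) (add_le_add_right (hlu hxlu) ε)
          linarith [inv_pos.2 hm]
        · have hm_le : 1 / (ε + ψ x) ≤ m⁻¹ := by
            rw [one_div]
            exact inv_anti₀ hm (by linarith [hmψ x ⟨hx, hxlu⟩])
          linarith [one_div_pos.2 (by positivity : 0 < ε + c * x ^ 2)]
    _ = (∫ x in α..β, 1 / (ε + c * x ^ 2)) + (β - α) * m⁻¹ := by
        rw [intervalIntegral.integral_add hmodel_int intervalIntegrable_const,
          intervalIntegral.integral_const, smul_eq_mul]

theorem tendsto_sqrt_mul_integral_one_div_add (hc : 0 < c) (hα : α < 0) (hβ : 0 < β)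
    (hψ : ContinuousOn ψ (Icc α β)) (hpos : ∀ x ∈ Icc α β, x ≠ 0 → 0 < ψ x)
    (hψc : (fun x => ψ x - c * x ^ 2) =o[𝓝 0] fun x => x ^ 2) :
    Tendsto (fun ε => √ε * ∫ x in α..β, 1 / (ε + ψ x)) (𝓝[>] 0) (𝓝 (π / √c)) := by
  have hcont : ContinuousAt (fun c' => π / √c') c :=
    continuousAt_const.div continuous_sqrt.continuousAt (sqrt_pos.2 hc).ne'
  refine tendsto_order.2 ⟨fun b hb => ?_, fun b hb => ?_⟩
  · obtain ⟨c', hbc', hcc'⟩ := (((hcont.eventually (lt_mem_nhds hb)).filter_mono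
      nhdsWithin_le_nhds).and (self_mem_nhdsWithin (s := Ioi c))).exists
    exact eventually_lt_sqrt_mul_integral_one_div_add hα hβ hψ
      (nonneg_of_pos_of_eventually_mul_sq_le hpos
        (eventually_mul_sq_le_of_isLittleO hψc (half_lt_self hc))) (hc.trans hcc')
      (eventually_le_mul_sq_of_isLittleO hψc hcc') hbc'
  · obtain ⟨c', hbc', hc'c⟩ := (((hcont.eventually (gt_mem_nhds hb)).filter_mono
      (nhdsWithin_le_nhds (s := Iio c))).and (Ioo_mem_nhdsLT hc)).exists
    exact eventually_sqrt_mul_integral_one_div_add_lt hα hβ hψ hpos hc'c.1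
      (eventually_mul_sq_le_of_isLittleO hψc hc'c.2) hbc'

end Localization

namespace Function.Periodic

variable {φ : ℝ → ℝ}

theorem apply_lt_apply_add_of_abs_lt_one (hφ : Periodic φ 1) {g₀ x : ℝ} (hmin : ∀ γ, φ g₀ ≤ φ γ)
    (huniq : ∀ γ ∈ Ico (0 : ℝ) 1, φ γ = φ g₀ → γ = g₀) (hx : |x| < 1) (hx0 : x ≠ 0) :
    φ g₀ < φ (g₀ + x) := by
  refine (hmin _).lt_of_ne fun heq => hx0 ?_
  have hfract : Int.fract (g₀ + x) = g₀ :=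
    huniq _ ⟨Int.fract_nonneg _, Int.fract_lt_one _⟩ <| by
      rw [Int.fract, heq]
      simpa using hφ.sub_int_mul_eq ⌊g₀ + x⌋ (x := g₀ + x)
  have hxint : x = ⌊g₀ + x⌋ := by linarith [Int.self_sub_floor (g₀ + x)]
  rw [hxint] at hx ⊢
  exact_mod_cast Int.abs_lt_one_iff.1 (by exact_mod_cast hx)

theorem intervalIntegral_zero_eq_comp_add {T : ℝ} (hφ : Periodic φ T) (t : ℝ) :
    ∫ x in 0..T, φ x = ∫ x in (-(T / 2))..(T / 2), φ (t + x) := by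
  have hshift := hφ.intervalIntegral_add_eq 0 (t - T / 2)
  rw [zero_add] at hshift
  rw [intervalIntegral.integral_comp_add_left, hshift]
  congr 1; ring

end Function.Periodic

theorem ode_sqrt_depinning_general (φ : ℝ → ℝ) (hφ : ContDiff ℝ 2 φ)
    (hφp : Function.Periodic φ 1)
    (g₀ : ℝ)
    (hmin : ∀ γ : ℝ, φ g₀ ≤ φ γ)
    (huniq : ∀ γ ∈ Set.Ico (0:ℝ) 1, φ γ = φ g₀ → γ = g₀)
    (hnondeg : 0 < deriv (deriv φ) g₀)
    (Fc : ℝ) (hFc : Fc = -φ g₀)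
    (v : ℝ → ℝ) (hv : ∀ F : ℝ, v F = (∫ γ in (0:ℝ)..1, 1 / (F + φ γ))⁻¹) :
    Tendsto (fun F : ℝ => v F / Real.sqrt (F - Fc))
      (nhdsWithin Fc (Set.Ioi Fc))
      (nhds (Real.sqrt (deriv (deriv φ) g₀ / 2) / π)) := by
  set ψ : ℝ → ℝ := fun x => φ (g₀ + x) - φ g₀
  have hψc : (fun x => ψ x - deriv (deriv φ) g₀ / 2 * x ^ 2) =o[𝓝 0] fun x => x ^ 2 := by
    have hcrit : deriv φ g₀ = 0 := IsLocalMin.deriv_eq_zero (Eventually.of_forall hmin)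
    refine (hφ.isLittleO_sub_taylor_two g₀).congr_left fun x => ?_
    simp only [ψ, hcrit]
    ring
  have hpos : ∀ x ∈ Icc (-(1 / 2) : ℝ) (1 / 2), x ≠ 0 → 0 < ψ x := fun x hx hx0 =>
    sub_pos.2 <| hφp.apply_lt_apply_add_of_abs_lt_one hmin huniq
      (abs_lt.2 ⟨by linarith [hx.1], by linarith [hx.2]⟩) hx0
  have hψcont : Continuous ψ := (hφ.continuous.comp (continuous_const_add g₀)).sub continuous_const
  have hlim := tendsto_sqrt_mul_integral_one_div_add (half_pos hnondeg) (by norm_num)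
    (by norm_num) hψcont.continuousOn hpos hψc
  have hvel := (hlim.comp (tendsto_sub_nhdsGT_zero Fc)).inv₀ (by positivity)
  rw [inv_div] at hvel
  refine hvel.congr fun F => ?_
  have hint : ∫ γ in (0 : ℝ)..1, 1 / (F + φ γ)
      = ∫ x in (-(1 / 2) : ℝ)..(1 / 2), 1 / (F - Fc + ψ x) := by
    refine ((hφp.comp fun y => 1 / (F + y)).intervalIntegral_zero_eq_comp_add g₀).trans ?_
    norm_num [ψ, hFc]
  rw [Function.comp_apply, hv, hint, mul_inv]
  exact div_eq_inv_mul _ _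

/-- square-root depinning law for the ODE model: if `φ` is `C²`,
1-periodic, attains its minimum on `[0,1)` at the unique point `g₀` with `φ''(g₀) > 0`,
and `F_c = -min φ`, then the average velocity `v̄(F) = (∫_0^1 dγ/(F+φ(γ)))⁻¹` satisfies
`v̄(F)/√(F - F_c) → √(φ''(g₀)/2)/π` as `F → F_c⁺`. -/
theorem ode_sqrt_depinning (φ : ℝ → ℝ) (hφ : ContDiff ℝ 2 φ)
    (hφp : Function.Periodic φ 1)
    (g₀ : ℝ) (hg₀ : g₀ ∈ Set.Ico (0:ℝ) 1)
    (hmin : ∀ γ : ℝ, φ g₀ ≤ φ γ)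
    (huniq : ∀ γ ∈ Set.Ico (0:ℝ) 1, φ γ = φ g₀ → γ = g₀)
    (hnondeg : 0 < deriv (deriv φ) g₀)
    (Fc : ℝ) (hFc : Fc = -φ g₀)
    (v : ℝ → ℝ) (hv : ∀ F : ℝ, v F = (∫ γ in (0:ℝ)..1, 1 / (F + φ γ))⁻¹) :
    Tendsto (fun F : ℝ => v F / Real.sqrt (F - Fc))
      (nhdsWithin Fc (Set.Ioi Fc))
      (nhds (Real.sqrt (deriv (deriv φ) g₀ / 2) / π)) :=
  ode_sqrt_depinning_general φ hφ hφp g₀ hmin huniq hnondeg Fc hFc v hv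
end

section
/- Let v̄(F) = 2(F − 1)/(1 − log F + F·log F + log(F − 1) − F·log(F − 1)) for F > 1. Then v̄(F)/(F − 1) → 2 as F → 1 from above; i.e., near the depinning threshold F_c = 1 the average velocity behaves like 2(F − F_c) in leading order, exhibiting a linear (exponent 1) depinning law. -/
open Real Filter

/-- The velocity's denominator, with its two singular terms `log (F - 1) - F log (F - 1)` combined
into `-(F - 1) log (F - 1)`, which vanishes as `F → 1`. -/
lemma tendsto_depinning_denominator :
    Tendsto (fun F : ℝ => 1 - log F + F * log F - (F - 1) * log (F - 1)) (nhds 1) (nhds 1) := by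
  have hcont : ContinuousAt (fun F : ℝ => 1 - log F + F * log F - (F - 1) * log (F - 1)) 1 :=
    ((continuousAt_const.sub (continuousAt_log one_ne_zero)).add
      continuous_mul_log.continuousAt).sub
      (continuous_mul_log.continuousAt.comp (continuousAt_id.sub continuousAt_const))
  simpa using hcont.tendsto

/-- the velocity
`v̄(F) = 2(F-1)/(1 - log F + F·log F + log(F-1) - F·log(F-1))` satisfies
`v̄(F)/(F-1) → 2` as `F → 1⁺`: a linear (exponent 1) depinning law at `F_c = 1`. -/
theorem flat_obstacle_linear_depinning :
    Tendsto
      (fun F : ℝ =>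
        (2 * (F - 1)
          / (1 - Real.log F + F * Real.log F + Real.log (F - 1) - F * Real.log (F - 1)))
        / (F - 1))
      (nhdsWithin 1 (Set.Ioi 1)) (nhds 2) := by
  have hlim : Tendsto (fun F : ℝ => 2 / (1 - log F + F * log F - (F - 1) * log (F - 1)))
      (nhds 1) (nhds 2) := by
    simpa [Pi.div_def] using
      (tendsto_const_nhds (x := (2 : ℝ))).div tendsto_depinning_denominator one_ne_zero
  refine (hlim.mono_left nhdsWithin_le_nhds).congr' ?_
  filter_upwards [self_mem_nhdsWithin] with F (hF : 1 < F)
  have hF₁ : F - 1 ≠ 0 := sub_ne_zero.mpr hF.ne'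
  rw [div_right_comm, mul_div_assoc, div_self hF₁, mul_one]
  congr 1
  ring
end
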